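/- arXiv:2602.12589 — 11 statements merged into one kernel-verified Lean document; each statement's English description precedes it below -/
import Mathlib

section
/- If φ: ℝ → ℝ satisfies -log(1 - x + x²/2) ≤ φ(x) ≤ log(1 + x + x²/2) for all real x, then |φ(x) - x| ≤ x² for all real x. -/
theorem catoni_sub_le_sq (φ : ℝ → ℝ)
    (hφ : ∀ x : ℝ, -Real.log (1 - x + x^2/2) ≤ φ x ∧ φ x ≤ Real.log (1 + x + x^2/2)) :
    ∀ x : ℝ, |φ x - x| ≤ x^2 := by
  have key : ∀ x : ℝ, Real.log (1 + x + x^2/2) ≤ x + x^2 := by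
    intro x
    have hpos : (0:ℝ) < 1 + x + x^2/2 := by nlinarith [sq_nonneg (x+1)]
    rw [Real.log_le_iff_le_exp hpos]
    have := Real.add_one_le_exp (x + x^2)
    nlinarith [sq_nonneg x]
  intro x
  obtain ⟨h1, h2⟩ := hφ x
  have hu : φ x - x ≤ x^2 := by
    have := key x; linarith
  have hl : -(x^2) ≤ φ x - x := by
    have hk := key (-x)
    have : Real.log (1 - x + x^2/2) ≤ -x + x^2 := by
      have e : 1 + (-x) + (-x)^2/2 = 1 - x + x^2/2 := by ring
      rw [e] at hk; nlinarith
    linarith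
  rw [abs_le]; exact ⟨hl, hu⟩
end

section
/- If φ: ℝ → ℝ satisfies -log(1 - x + x²/2) ≤ φ(x) ≤ log(1 + x + x²/2) for all real x, then |φ(x)² - x²| ≤ 4x²·1(|x| ≥ 1) + 2|x|³·1(|x| ≤ 1) for all real x. -/
private lemma logB (x : ℝ) : Real.log (1 + x + x^2/2) ≤ x + x^2/2 := by
  have hz : (0:ℝ) < 1 + x + x^2/2 := by nlinarith [sq_nonneg (x+1)]
  have := Real.log_le_sub_one_of_pos hz
  linarith

private lemma logA (t : ℝ) (ht : 0 ≤ t) :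
    Real.log (1 + t + t^2/2) ≤ Real.sqrt 2 * t := by
  set s := Real.sqrt 2 with hsdef
  have hs : s^2 = 2 := Real.sq_sqrt (by norm_num)
  have hs0 : 0 ≤ s := Real.sqrt_nonneg 2
  have hs1 : 1 ≤ s := by nlinarith
  have hz : (0:ℝ) < 1 + t + t^2/2 := by nlinarith
  have h1 : 1 + t + t^2/2 ≤ (1 + s*t/2)^2 := by nlinarith
  have hsq : Real.sqrt (1 + t + t^2/2) ≤ 1 + s*t/2 := by
    have h2 : (1 + s*t/2) = Real.sqrt ((1 + s*t/2)^2) :=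
      (Real.sqrt_sq (by nlinarith)).symm
    rw [h2]
    exact Real.sqrt_le_sqrt h1
  have hlog : Real.log (1 + t + t^2/2) = 2 * Real.log (Real.sqrt (1 + t + t^2/2)) := by
    rw [Real.log_sqrt hz.le]; ring
  have hpos : 0 < Real.sqrt (1 + t + t^2/2) := Real.sqrt_pos.mpr hz
  have h3 := Real.log_le_sub_one_of_pos hpos
  calc Real.log (1 + t + t^2/2) = 2 * Real.log (Real.sqrt (1 + t + t^2/2)) := hlog
    _ ≤ 2 * (Real.sqrt (1 + t + t^2/2) - 1) := by linarith
    _ ≤ 2 * (1 + s*t/2 - 1) := by linarith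
    _ = s * t := by ring

set_option maxHeartbeats 1000000 in
theorem catoni_sq_sub_sq (φ : ℝ → ℝ)
    (hφ : ∀ x : ℝ, -Real.log (1 - x + x^2/2) ≤ φ x ∧ φ x ≤ Real.log (1 + x + x^2/2)) :
    ∀ x : ℝ, |(φ x)^2 - x^2| ≤
      (if 1 ≤ |x| then 4 * x^2 else 0) + (if |x| ≤ 1 then 2 * |x|^3 else 0) := by
  intro x
  obtain ⟨hl, hu⟩ := hφ x
  have hax : 0 ≤ |x| := abs_nonneg x
  have haxsq : |x|^2 = x^2 := sq_abs x
  have hxle : x ≤ |x| := le_abs_self x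
  have hxge : -|x| ≤ x := neg_abs_le x
  -- upper bound: φ x ≤ x + x²/2
  have hhi : φ x ≤ x + x^2/2 := le_trans hu (logB x)
  -- lower bound: x − x²/2 ≤ φ x
  have hB2 : Real.log (1 - x + x^2/2) ≤ -x + x^2/2 := by
    have h := logB (-x)
    have he : (1:ℝ) + -x + (-x)^2/2 = 1 - x + x^2/2 := by ring
    rw [he] at h
    linarith
  have hlo : x - x^2/2 ≤ φ x := by linarith
  rcases le_total 1 |x| with hc | hc
  · -- large x case
    have hz1 : (0:ℝ) < 1 + x + x^2/2 := by nlinarith [sq_nonneg (x+1)]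
    have hz2 : (0:ℝ) < 1 - x + x^2/2 := by nlinarith [sq_nonneg (x-1)]
    have hA := logA |x| hax
    have hs : (Real.sqrt 2)^2 = 2 := Real.sq_sqrt (by norm_num)
    have hs0 : 0 ≤ Real.sqrt 2 := Real.sqrt_nonneg 2
    have hm1 : Real.log (1 + x + x^2/2) ≤ Real.log (1 + |x| + |x|^2/2) := by
      apply Real.log_le_log hz1
      nlinarith
    have hm2 : Real.log (1 - x + x^2/2) ≤ Real.log (1 + |x| + |x|^2/2) := by
      apply Real.log_le_log hz2
      nlinarith
    have hup : φ x ≤ Real.sqrt 2 * |x| := by linarith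
    have hdn : -(Real.sqrt 2 * |x|) ≤ φ x := by linarith
    have hsq2 : (φ x)^2 ≤ 2 * x^2 := by nlinarith
    have hb : |(φ x)^2 - x^2| ≤ 4 * x^2 := by
      rw [abs_le]
      constructor <;> nlinarith [sq_nonneg (φ x)]
    rw [if_pos hc]
    have h0 : (0:ℝ) ≤ if |x| ≤ 1 then 2 * |x|^3 else 0 := by positivity
    linarith
  · -- small x case
    have hd2 : (φ x - x)^2 ≤ x^4/4 := by nlinarith
    have hx4 : x^4 = |x|^4 := by
      calc x^4 = (x^2)^2 := by ring
        _ = (|x|^2)^2 := by rw [haxsq]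
        _ = |x|^4 := by ring
    have h4 : x^4 ≤ |x|^3 := by
      rw [hx4]; exact pow_le_pow_of_le_one hax hc (by norm_num)
    have habsd : |φ x - x| ≤ x^2/2 := abs_le.mpr ⟨by linarith, by linarith⟩
    have hmm : |x| * |φ x - x| ≤ |x| * (x^2/2) :=
      mul_le_mul_of_nonneg_left habsd hax
    have h5 : |x| * (x^2/2) = |x|^3/2 := by rw [← haxsq]; ring
    have hxd1 : x * (φ x - x) ≤ |x|^3/2 := by
      calc x * (φ x - x) ≤ |x * (φ x - x)| := le_abs_self _
        _ = |x| * |φ x - x| := abs_mul _ _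
        _ ≤ |x|^3/2 := by rw [← h5]; exact hmm
    have hxd2 : -(|x|^3/2) ≤ x * (φ x - x) := by
      have := neg_abs_le (x * (φ x - x))
      have h7 : |x * (φ x - x)| = |x| * |φ x - x| := abs_mul _ _
      linarith
    have h6 : (0:ℝ) ≤ |x|^3 := by positivity
    have hid : (φ x)^2 - x^2 = (φ x - x)^2 + 2*(x*(φ x - x)) := by ring
    have hb : |(φ x)^2 - x^2| ≤ 2 * |x|^3 := by
      rw [abs_le]
      constructor
      · nlinarith [sq_nonneg (φ x - x)]
      · linarith
    rw [if_pos hc]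
    have h0 : (0:ℝ) ≤ if 1 ≤ |x| then 4 * x^2 else 0 := by positivity
    linarith
end

section
/- For all real x₁, x₂: φ(x₁) - φ(x₂) ≤ log(1 + (x₁ - x₂) + 3(x₁ - x₂)²/4 + x₁²x₂²/2), where φ satisfies the Catoni bounds. -/
theorem catoni_diff_log_bound (φ : ℝ → ℝ)
    (hφ : ∀ x : ℝ, -Real.log (1 - x + x^2/2) ≤ φ x ∧ φ x ≤ Real.log (1 + x + x^2/2)) :
    ∀ x₁ x₂ : ℝ, φ x₁ - φ x₂ ≤
      Real.log (1 + (x₁ - x₂) + 3 * (x₁ - x₂)^2 / 4 + x₁^2 * x₂^2 / 2) := by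
  intro x₁ x₂
  have h1 : (0:ℝ) < 1 + x₁ + x₁^2/2 := by nlinarith [sq_nonneg (x₁ + 1)]
  have h2 : (0:ℝ) < 1 - x₂ + x₂^2/2 := by nlinarith [sq_nonneg (x₂ - 1)]
  have hφ1 := (hφ x₁).2
  have hφ2 := (hφ x₂).1
  have step : φ x₁ - φ x₂ ≤ Real.log ((1 + x₁ + x₁^2/2) * (1 - x₂ + x₂^2/2)) := by
    rw [Real.log_mul (ne_of_gt h1) (ne_of_gt h2)]
    linarith
  refine step.trans (Real.log_le_log (by positivity) ?_)
  nlinarith [sq_nonneg (x₁*x₂ - (x₂ - x₁)), sq_nonneg (x₁*x₂ + (x₂ - x₁))]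
end

section
/- Let φ: ℝ → ℝ satisfy -log(1 - x + x²/2) ≤ φ(x) ≤ log(1 + x + x²/2) for all x. Then for all x₁, x₂ ∈ ℝ: |φ(x₁) - φ(x₂) - (x₁ - x₂)| ≤ log(1 + x₁²x₂²/2) + |x₁ - x₂|·( (x₁²x₂²/2)/(1 + x₁²x₂²/2) + |x₁ - x₂| ). -/
/-!
Write `P = (1 + a + a²/2)(1 - b + b²/2)` and `t = 1 + a²b²/2`. The Catoni bounds give
`φ a - φ b ≤ log P`, and concavity of `log` gives `log P ≤ log t + P/t - 1`. Expanding
`P = 1 + d + d²/2 - ab·d/2 + a²b²/4` with `d = a - b` shows that `P/t - 1 - d` is at most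
`|d| (t - 1)/t + d²`. The lower bound follows by applying the upper one to `x ↦ -φ (-x)`,
which satisfies the same Catoni bounds.
-/

open Real

def IsCatoniInfluence (φ : ℝ → ℝ) : Prop :=
  ∀ x : ℝ, -log (1 - x + x^2/2) ≤ φ x ∧ φ x ≤ log (1 + x + x^2/2)

noncomputable def catoniExpansionBound (a b : ℝ) : ℝ :=
  log (1 + a^2 * b^2 / 2) + |a - b| * ((a^2 * b^2 / 2) / (1 + a^2 * b^2 / 2) + |a - b|)

lemma catoniExpansionBound_neg_neg (a b : ℝ) :
    catoniExpansionBound (-a) (-b) = catoniExpansionBound a b := by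
  rw [catoniExpansionBound, neg_sq, neg_sq, neg_sub_neg, abs_sub_comm b a, catoniExpansionBound]

lemma IsCatoniInfluence.neg_comp_neg {φ : ℝ → ℝ} (hφ : IsCatoniInfluence φ) :
    IsCatoniInfluence fun x => -φ (-x) := by
  intro x
  obtain ⟨hlow, hupp⟩ := hφ (-x)
  simp only [sub_neg_eq_add, neg_sq, ← sub_eq_add_neg] at hlow hupp
  constructor <;> linarith

lemma one_add_add_sq_div_two_pos (x : ℝ) : 0 < 1 + x + x^2/2 := by
  nlinarith [sq_nonneg (x + 1)]

lemma log_le_log_add_div_sub_one {x y : ℝ} (hx : 0 < x) (hy : 0 < y) :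
    log x ≤ log y + (x / y - 1) := by
  have := log_le_sub_one_of_pos (div_pos hx hy)
  rw [log_div hx.ne' hy.ne'] at this
  linarith

lemma catoni_product_div_sub_le (a b : ℝ) :
    (1 + a + a^2/2) * (1 - b + b^2/2) / (1 + a^2 * b^2 / 2) - 1 - (a - b) ≤
      |a - b| * ((a^2 * b^2 / 2) / (1 + a^2 * b^2 / 2) + |a - b|) := by
  set d := a - b with hd
  set s := a^2 * b^2 / 2
  have ht : 0 < 1 + s := by positivity
  have hP : (1 + a + a^2/2) * (1 - b + b^2/2) = 1 + d + d^2/2 - a * b * d / 2 + s / 2 := by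
    rw [hd]; ring
  have hnum : d^2/2 - a * b * d / 2 - s / 2 - d * s ≤ |d| * s + |d|^2 * (1 + s) := by
    rw [sq_abs]
    nlinarith [sq_nonneg (d + a * b / 2), neg_abs_le d, sq_nonneg (a * b),
      mul_nonneg (sq_nonneg d) (by positivity : (0 : ℝ) ≤ s)]
  have hdiff : |d| * (s / (1 + s) + |d|) - ((1 + a + a^2/2) * (1 - b + b^2/2) / (1 + s) - 1 - d) =
      (|d| * s + |d|^2 * (1 + s) - (d^2/2 - a * b * d / 2 - s / 2 - d * s)) / (1 + s) := by
    rw [hP]; field_simp; ring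
  rw [← sub_nonneg, hdiff]
  exact div_nonneg (by linarith) ht.le

lemma IsCatoniInfluence.sub_sub_le {φ : ℝ → ℝ} (hφ : IsCatoniInfluence φ) (a b : ℝ) :
    φ a - φ b - (a - b) ≤ catoniExpansionBound a b := by
  have hb : 0 < 1 - b + b^2/2 := by simpa [sub_eq_add_neg] using one_add_add_sq_div_two_pos (-b)
  have hprod : φ a - φ b ≤ log ((1 + a + a^2/2) * (1 - b + b^2/2)) := by
    rw [log_mul (one_add_add_sq_div_two_pos a).ne' hb.ne']
    linarith [(hφ a).2, (hφ b).1]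
  have hlog := log_le_log_add_div_sub_one (mul_pos (one_add_add_sq_div_two_pos a) hb)
    (by positivity : (0 : ℝ) < 1 + a^2 * b^2 / 2)
  have := catoni_product_div_sub_le a b
  unfold catoniExpansionBound
  linarith

theorem catoni_expansion_bound (φ : ℝ → ℝ)
    (hφ : ∀ x : ℝ, -Real.log (1 - x + x^2/2) ≤ φ x ∧ φ x ≤ Real.log (1 + x + x^2/2)) :
    ∀ x₁ x₂ : ℝ, |φ x₁ - φ x₂ - (x₁ - x₂)| ≤
      Real.log (1 + x₁^2 * x₂^2 / 2) +
        |x₁ - x₂| * ((x₁^2 * x₂^2 / 2) / (1 + x₁^2 * x₂^2 / 2) + |x₁ - x₂|) := by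
  intro a b
  change _ ≤ catoniExpansionBound a b
  have hφ : IsCatoniInfluence φ := hφ
  have hlower := hφ.neg_comp_neg.sub_sub_le (-a) (-b)
  simp only [neg_neg, catoniExpansionBound_neg_neg] at hlower
  exact abs_le.2 ⟨by linarith, hφ.sub_sub_le a b⟩
end

section
/- Let φ: ℝ → ℝ satisfy -log(1 - x + x²/2) ≤ φ(x) ≤ log(1 + x + x²/2) for all x. Then for all x₁, x₂ ∈ ℝ: |φ(x₁) - φ(x₂)| ≤ log(1 + x₁²x₂²/2) + 2|x₁ - x₂| + (x₁ - x₂)². -/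
lemma catoni_key_poly (a b : ℝ) :
    (1 + a + a^2/2) * (1 - b + b^2/2) ≤
      (1 + a^2 * b^2 / 2) * (1 + |a - b| + (a - b)^2/2)^2 := by
  rcases abs_cases (a - b) with ⟨h, _⟩ | ⟨h, _⟩ <;> rw [h] <;>
    nlinarith [sq_nonneg (a - b), sq_nonneg (a + b), sq_nonneg (a*b), sq_nonneg (a*b - 1),
      sq_nonneg (a*b + 1), sq_nonneg ((a - b)*(a*b)), sq_nonneg ((a - b)^2),
      sq_nonneg (a*b*(a-b) - 1), sq_nonneg (a*b*(a-b) + 1), sq_nonneg (a - b - a*b),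
      sq_nonneg (a - b + a*b)]

lemma catoni_half (a b : ℝ) :
    Real.log (1 + a + a^2/2) + Real.log (1 - b + b^2/2) ≤
      Real.log (1 + a^2 * b^2 / 2) + 2 * |a - b| + (a - b)^2 := by
  have hpa : (0:ℝ) < 1 + a + a^2/2 := by nlinarith [sq_nonneg (a + 1)]
  have hpb : (0:ℝ) < 1 - b + b^2/2 := by nlinarith [sq_nonneg (b - 1)]
  have hab : (0:ℝ) < 1 + a^2 * b^2 / 2 := by positivity
  have hd : (0:ℝ) < 1 + |a - b| + (a - b)^2/2 := by positivity
  have h1 : Real.log (1 + a + a^2/2) + Real.log (1 - b + b^2/2)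
      = Real.log ((1 + a + a^2/2) * (1 - b + b^2/2)) := (Real.log_mul hpa.ne' hpb.ne').symm
  rw [h1]
  have h2 : Real.log ((1 + a + a^2/2) * (1 - b + b^2/2)) ≤
      Real.log ((1 + a^2 * b^2 / 2) * (1 + |a - b| + (a - b)^2/2)^2) :=
    Real.log_le_log (by positivity) (catoni_key_poly a b)
  have h3 : Real.log ((1 + a^2 * b^2 / 2) * (1 + |a - b| + (a - b)^2/2)^2)
      = Real.log (1 + a^2 * b^2 / 2) + 2 * Real.log (1 + |a - b| + (a - b)^2/2) := by
    rw [Real.log_mul hab.ne' (by positivity), Real.log_pow]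
    ring
  have h4 : Real.log (1 + |a - b| + (a - b)^2/2) ≤ |a - b| + (a - b)^2/2 := by
    have := Real.log_le_sub_one_of_pos hd
    linarith
  calc Real.log ((1 + a + a^2/2) * (1 - b + b^2/2)) ≤ _ := h2
    _ = _ := h3
    _ ≤ Real.log (1 + a^2 * b^2 / 2) + 2 * |a - b| + (a - b)^2 := by linarith

theorem catoni_diff_abs_bound (φ : ℝ → ℝ)
    (hφ : ∀ x : ℝ, -Real.log (1 - x + x^2/2) ≤ φ x ∧ φ x ≤ Real.log (1 + x + x^2/2)) :
    ∀ x₁ x₂ : ℝ, |φ x₁ - φ x₂| ≤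
      Real.log (1 + x₁^2 * x₂^2 / 2) + 2 * |x₁ - x₂| + (x₁ - x₂)^2 := by
  intro x₁ x₂
  rw [abs_sub_le_iff]
  obtain ⟨h1l, h1u⟩ := hφ x₁
  obtain ⟨h2l, h2u⟩ := hφ x₂
  constructor
  · have := catoni_half x₁ x₂
    linarith
  · have := catoni_half x₂ x₁
    have e1 : |x₂ - x₁| = |x₁ - x₂| := abs_sub_comm _ _
    have e2 : (x₂ - x₁)^2 = (x₁ - x₂)^2 := by ring
    have e3 : x₂^2 * x₁^2 = x₁^2 * x₂^2 := by ring
    rw [e1, e2, e3] at this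
    linarith
end

section
/- Let φ: ℝ → ℝ satisfy -log(1 - x + x²/2) ≤ φ(x) ≤ log(1 + x + x²/2) for all x. Then for all x₁, x₂ ∈ ℝ: |φ(x₁) - φ(x₂) - (x₁ - x₂)| ≤ 2|x₁x₂|^{3/2} + 0.4|x₁x₂|·|x₁ - x₂| + |x₁ - x₂|². -/
private lemma catoni_rpow_eq (p : ℝ) : |p| ^ ((3:ℝ)/2) = Real.sqrt |p| ^ 3 := by
  rw [show ((3:ℝ)/2) = (1/2) * 3 by norm_num, Real.rpow_mul (abs_nonneg p),
    ← Real.sqrt_eq_rpow, ← Real.rpow_natCast (Real.sqrt |p|) 3]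
  norm_num

private lemma catoni_poly1 (s b : ℝ) (hs : 0 ≤ s) (_hb : 0 ≤ b) (hcase : s ≤ 7.8) :
    b^2/2 + s^4/4 + s^2*b/2 ≤ 2*s^3 + 0.4*s^2*b + b^2 := by
  nlinarith [sq_nonneg (0.1*s^2 - b),
    mul_nonneg (mul_nonneg (mul_nonneg hs hs) hs) (show (0:ℝ) ≤ 7.8 - s by linarith)]

private lemma catoni_poly2 (s b t : ℝ) (hb : 0 ≤ b) (hs : 7.8 ≤ s)
    (ht : t ≤ (s^2 + 2*b)/4) : 2*(1 + b + s^2/2 + t) + b ≤ 2*s^3 + 0.4*s^2*b + b^2 := by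
  have hs0 : (0:ℝ) ≤ s := by linarith
  nlinarith [sq_nonneg b,
    mul_nonneg hb (mul_nonneg (show (0:ℝ) ≤ s - 7.8 by linarith) (show (0:ℝ) ≤ s + 7.8 by linarith)),
    mul_nonneg (mul_nonneg hs0 hs0) (show (0:ℝ) ≤ s - 7.8 by linarith),
    mul_nonneg (show (0:ℝ) ≤ s - 7.8 by linarith) (show (0:ℝ) ≤ s + 7.8 by linarith)]

private lemma catoni_key (d p : ℝ) (hA : (0:ℝ) < 1 + d + d^2/2 + p^2/4 - p*d/2) :
    Real.log (1 + d + d^2/2 + p^2/4 - p*d/2) - d ≤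
      2 * |p| ^ ((3:ℝ)/2) + 0.4 * |p| * |d| + d^2 := by
  rw [catoni_rpow_eq]
  set s := Real.sqrt |p| with hs
  have hsn : 0 ≤ s := Real.sqrt_nonneg _
  have hs2 : s^2 = |p| := Real.sq_sqrt (abs_nonneg p)
  rw [← hs2]
  have hp2 : p^2 = s^4 := by
    have h := sq_abs p
    rw [← hs2] at h
    nlinarith [h]
  have hpd : -(p*d) ≤ s^2 * |d| := by
    rw [hs2, ← abs_mul]; exact neg_le_abs _
  have hd2 : d^2 = |d|^2 := (sq_abs d).symm
  have hb : 0 ≤ |d| := abs_nonneg d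
  have hdb : -d ≤ |d| := neg_le_abs d
  have hdb' : d ≤ |d| := le_abs_self d
  by_cases hcase : s ≤ 7.8
  · have hlog := Real.log_le_sub_one_of_pos hA
    have hpoly := catoni_poly1 s |d| hsn hb hcase
    nlinarith [hlog, hpoly, hpd, hp2, hd2]
  · push_neg at hcase
    set t := Real.sqrt (s^2 * |d| / 2) with ht
    have htn : 0 ≤ t := Real.sqrt_nonneg _
    have ht2 : t^2 = s^2 * |d| / 2 := Real.sq_sqrt (by positivity)
    have h1 : 1 + d + d^2/2 + p^2/4 - p*d/2 ≤ (1 + |d| + s^2/2 + t)^2 := by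
      nlinarith [mul_nonneg (mul_nonneg hb hsn) hsn, sq_nonneg |d|,
        mul_nonneg htn hb, mul_nonneg htn (mul_nonneg hsn hsn)]
    have h2 : Real.sqrt (1 + d + d^2/2 + p^2/4 - p*d/2) ≤ 1 + |d| + s^2/2 + t := by
      calc Real.sqrt (1 + d + d^2/2 + p^2/4 - p*d/2)
          ≤ Real.sqrt ((1 + |d| + s^2/2 + t)^2) := Real.sqrt_le_sqrt h1
        _ = 1 + |d| + s^2/2 + t := Real.sqrt_sq (by positivity)
    have hlog2 : Real.log (1 + d + d^2/2 + p^2/4 - p*d/2) ≤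
        2 * Real.sqrt (1 + d + d^2/2 + p^2/4 - p*d/2) := by
      have h3 := Real.log_le_sub_one_of_pos (Real.sqrt_pos.mpr hA)
      rw [Real.log_sqrt hA.le] at h3
      linarith
    have h4t : t ≤ (s^2 + 2*|d|)/4 := by
      calc t ≤ Real.sqrt (((s^2 + 2*|d|)/4)^2) := by
              apply Real.sqrt_le_sqrt
              nlinarith [sq_nonneg (s^2 - 2*|d|)]
        _ = (s^2 + 2*|d|)/4 := Real.sqrt_sq (by positivity)
    have hfin := catoni_poly2 s |d| t hb hcase.le h4t
    linarith

private lemma catoni_one_side (φ : ℝ → ℝ)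
    (hφ : ∀ x : ℝ, -Real.log (1 - x + x^2/2) ≤ φ x ∧ φ x ≤ Real.log (1 + x + x^2/2))
    (x₁ x₂ : ℝ) : φ x₁ - φ x₂ - (x₁ - x₂) ≤
      2 * |x₁ * x₂| ^ ((3:ℝ)/2) + 0.4 * |x₁ * x₂| * |x₁ - x₂| + |x₁ - x₂|^2 := by
  have hf : (0:ℝ) < 1 + x₁ + x₁^2/2 := by nlinarith [sq_nonneg (x₁ + 1)]
  have hg : (0:ℝ) < 1 - x₂ + x₂^2/2 := by nlinarith [sq_nonneg (x₂ - 1)]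
  have h1 := (hφ x₁).2
  have h2 := (hφ x₂).1
  have hAeq : (1 + x₁ + x₁^2/2) * (1 - x₂ + x₂^2/2)
      = 1 + (x₁ - x₂) + (x₁ - x₂)^2/2 + (x₁*x₂)^2/4 - (x₁*x₂)*(x₁ - x₂)/2 := by ring
  have hA : (0:ℝ) < 1 + (x₁ - x₂) + (x₁ - x₂)^2/2 + (x₁*x₂)^2/4 - (x₁*x₂)*(x₁ - x₂)/2 := by
    rw [← hAeq]; exact mul_pos hf hg
  have hkey := catoni_key (x₁ - x₂) (x₁*x₂) hA
  have hmul : Real.log (1 + x₁ + x₁^2/2) + Real.log (1 - x₂ + x₂^2/2)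
      = Real.log (1 + (x₁ - x₂) + (x₁ - x₂)^2/2 + (x₁*x₂)^2/4 - (x₁*x₂)*(x₁ - x₂)/2) := by
    rw [← Real.log_mul hf.ne' hg.ne', hAeq]
  rw [sq_abs]
  linarith

theorem catoni_expansion_bound' (φ : ℝ → ℝ)
    (hφ : ∀ x : ℝ, -Real.log (1 - x + x^2/2) ≤ φ x ∧ φ x ≤ Real.log (1 + x + x^2/2)) :
    ∀ x₁ x₂ : ℝ, |φ x₁ - φ x₂ - (x₁ - x₂)| ≤
      2 * |x₁ * x₂| ^ ((3:ℝ)/2) + 0.4 * |x₁ * x₂| * |x₁ - x₂| + |x₁ - x₂|^2 := by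
  intro x₁ x₂
  rw [abs_le]
  constructor
  · have h := catoni_one_side φ hφ x₂ x₁
    rw [mul_comm x₂ x₁, abs_sub_comm x₂ x₁] at h
    linarith
  · exact catoni_one_side φ hφ x₁ x₂
end

section
/- Let X be a real random variable with E[X] = u and Var(X) = σ² < ∞, let α > 0 satisfy α²σ² < 1, and let φ satisfy the Catoni bounds. If u_α is any real number such that E[φ(α(X - u_α))] = 0, then |u_α - u| ≤ ασ²/√(1 - α²σ²). -/
/-!
Write `B x = E[φ (α (X - x))]`. The Catoni bounds give `|φ t - t| ≤ t² / 2`, so `B x` lies within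
`α² (σ² + (u - x)²) / 2` of `α (u - x)`, and `B` is antitone because `φ` is monotone. At the root
`uα`, the upper bound says that `y = α (uα - u)` satisfies `(1 - y)² ≥ 1 - α²σ²`, so `y` lies on one
of the two branches `y ≤ 1 - √(1 - α²σ²)` or `y ≥ 1 + √(1 - α²σ²)`. The second one is excluded
because the upper bound is negative at `x = u + 1/α`, whereas `B ≥ 0` to the left of `uα`. The
lower bound treats `u - uα` in the same way, and
`1 - √(1 - α²σ²) = α²σ² / (1 + √(1 - α²σ²)) ≤ α²σ² / √(1 - α²σ²)`.
-/

open MeasureTheory ProbabilityTheory Real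

lemma abs_sub_le_sq_half_of_neg_log_le_of_le_log {a t : ℝ}
    (h : -log (1 - t + t ^ 2 / 2) ≤ a ∧ a ≤ log (1 + t + t ^ 2 / 2)) :
    |a - t| ≤ t ^ 2 / 2 := by
  have hlo := log_le_sub_one_of_pos (by nlinarith [sq_nonneg (t - 1)] : 0 < 1 - t + t ^ 2 / 2)
  have hup := log_le_sub_one_of_pos (by nlinarith [sq_nonneg (t + 1)] : 0 < 1 + t + t ^ 2 / 2)
  rw [abs_le]
  constructor <;> linarith [h.1, h.2]

lemma mul_sub_le_one_sub_sqrt_of_antitone {B : ℝ → ℝ} (hB : Antitone B) {α σ u r : ℝ}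
    (hα : 0 < α) (hασ : α ^ 2 * σ ^ 2 < 1)
    (hle : ∀ x, B x ≤ α * (u - x) + α ^ 2 / 2 * (σ ^ 2 + (u - x) ^ 2)) (hr : B r = 0) :
    α * (r - u) ≤ 1 - √(1 - α ^ 2 * σ ^ 2) := by
  have hlt : α * (r - u) < 1 := by
    by_contra! h
    have hx : u + α⁻¹ ≤ r := by
      have := (inv_mul_le_iff₀ hα).2 h
      linarith
    have hbound := hr ▸ (hB hx).trans (hle _)
    have hval : α * (u - (u + α⁻¹)) + α ^ 2 / 2 * (σ ^ 2 + (u - (u + α⁻¹)) ^ 2)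
        = (α ^ 2 * σ ^ 2 - 1) / 2 := by
      field_simp
      ring
    linarith
  have hq := hr ▸ hle r
  have hsqrt : √(1 - α ^ 2 * σ ^ 2) ≤ 1 - α * (r - u) :=
    (sqrt_le_left (by linarith)).2 (by nlinarith)
  linarith

lemma abs_sub_le_of_antitone {B : ℝ → ℝ} (hB : Antitone B) {α σ u r : ℝ}
    (hα : 0 < α) (hασ : α ^ 2 * σ ^ 2 < 1)
    (hdev : ∀ x, |B x - α * (u - x)| ≤ α ^ 2 / 2 * (σ ^ 2 + (u - x) ^ 2)) (hr : B r = 0) :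
    |r - u| ≤ α * σ ^ 2 / √(1 - α ^ 2 * σ ^ 2) := by
  have hright := mul_sub_le_one_sub_sqrt_of_antitone (u := u) hB hα hασ
    (fun x => by linarith [(abs_le.1 (hdev x)).2]) hr
  have hleft := mul_sub_le_one_sub_sqrt_of_antitone (B := fun x => -B (-x)) (u := -u) (r := -r)
    (fun x y hxy => neg_le_neg (hB (neg_le_neg hxy))) hα hασ
    (fun x => by have := (abs_le.1 (hdev (-x))).1; ring_nf at this ⊢; linarith) (by simp [hr])
  set s := √(1 - α ^ 2 * σ ^ 2)
  have hs : 0 < s := sqrt_pos.2 (by linarith)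
  have hs2 : s ^ 2 = 1 - α ^ 2 * σ ^ 2 := sq_sqrt (by linarith)
  have hgap : 1 - s ≤ α * (α * σ ^ 2 / s) := by
    rw [mul_div_assoc', le_div_iff₀ hs]
    nlinarith
  rw [abs_sub_le_iff]
  constructor <;> refine le_of_mul_le_mul_left ?_ hα <;> linarith

section

variable {Ω : Type*} [MeasurableSpace Ω] {μ : Measure Ω} {X : Ω → ℝ}

lemma integral_sub_sq_eq_variance_add [IsProbabilityMeasure μ] (hX : MemLp X 2 μ) (x : ℝ) :
    ∫ ω, (X ω - x) ^ 2 ∂μ = Var[X; μ] + (μ[X] - x) ^ 2 := by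
  have h := variance_eq_sub (X := fun ω => X ω - x) (hX.sub (memLp_const x))
  rw [variance_sub_const hX.1 x, integral_sub (hX.integrable one_le_two) (integrable_const x)] at h
  simp only [Pi.pow_apply, integral_const, probReal_univ, smul_eq_mul, one_mul] at h
  linarith

lemma integrable_comp_of_abs_sub_le_sq_half [IsFiniteMeasure μ] {f : ℝ → ℝ}
    (hf : Measurable f) (hfid : ∀ t, |f t - t| ≤ t ^ 2 / 2) (hX : MemLp X 2 μ) :
    Integrable (fun ω => f (X ω)) μ := by
  have hdev : Integrable (fun ω => f (X ω) - X ω) μ :=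
    (hX.integrable_sq.div_const 2).mono' ((hf.comp_aemeasurable hX.aemeasurable).sub
      hX.aemeasurable).aestronglyMeasurable (ae_of_all _ fun ω => hfid (X ω))
  exact (hdev.add (hX.integrable one_le_two)).congr (ae_of_all _ fun ω => sub_add_cancel _ _)

lemma abs_integral_comp_sub_integral_le [IsFiniteMeasure μ] {f : ℝ → ℝ} (hf : Measurable f)
    (hfid : ∀ t, |f t - t| ≤ t ^ 2 / 2) (hX : MemLp X 2 μ) :
    |∫ ω, f (X ω) ∂μ - ∫ ω, X ω ∂μ| ≤ ∫ ω, X ω ^ 2 / 2 ∂μ := by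
  rw [← integral_sub (integrable_comp_of_abs_sub_le_sq_half hf hfid hX)
    (hX.integrable one_le_two)]
  exact (abs_integral_le_integral_abs).trans
    (integral_mono_of_nonneg (ae_of_all _ fun _ => abs_nonneg _) (hX.integrable_sq.div_const 2)
      (ae_of_all _ fun ω => hfid (X ω)))

lemma abs_integral_comp_mul_sub_le [IsProbabilityMeasure μ] {f : ℝ → ℝ} (hf : Measurable f)
    (hfid : ∀ t, |f t - t| ≤ t ^ 2 / 2) (hX : MemLp X 2 μ) (α x : ℝ) :
    |∫ ω, f (α * (X ω - x)) ∂μ - α * (μ[X] - x)|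
      ≤ α ^ 2 / 2 * (Var[X; μ] + (μ[X] - x) ^ 2) := by
  have h := abs_integral_comp_sub_integral_le hf hfid ((hX.sub (memLp_const x)).const_mul α)
  have hsq : ∀ ω, (α * (X ω - x)) ^ 2 / 2 = α ^ 2 / 2 * (X ω - x) ^ 2 := fun ω => by ring
  simp only [Pi.sub_apply, hsq] at h
  rwa [integral_const_mul, integral_const_mul, integral_sub (hX.integrable one_le_two)
    (integrable_const x), integral_const, integral_sub_sq_eq_variance_add hX, probReal_univ,
    smul_eq_mul, one_mul] at h

end

theorem catoni_bias_bound_general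
    {Ω : Type*} [MeasurableSpace Ω] (μ : Measure Ω) [IsProbabilityMeasure μ]
    (X : Ω → ℝ) (u σ α uα : ℝ)
    (hX2 : MemLp X 2 μ)
    (hmean : ∫ ω, X ω ∂μ = u)
    (hvar : variance X μ = σ^2)
    (hα : 0 < α) (hασ : α^2 * σ^2 < 1)
    (φ : ℝ → ℝ) (hmono : Monotone φ)
    (hφ : ∀ t : ℝ, -Real.log (1 - t + t^2/2) ≤ φ t ∧ φ t ≤ Real.log (1 + t + t^2/2))
    (hroot : ∫ ω, φ (α * (X ω - uα)) ∂μ = 0) :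
    |uα - u| ≤ α * σ^2 / Real.sqrt (1 - α^2 * σ^2) := by
  have hφid : ∀ t, |φ t - t| ≤ t ^ 2 / 2 := fun t =>
    abs_sub_le_sq_half_of_neg_log_le_of_le_log (hφ t)
  have hint : ∀ x, Integrable (fun ω => φ (α * (X ω - x))) μ := fun x =>
    integrable_comp_of_abs_sub_le_sq_half hmono.measurable hφid
      ((hX2.sub (memLp_const x)).const_mul α)
  have hanti : Antitone fun x => ∫ ω, φ (α * (X ω - x)) ∂μ := fun x y hxy =>
    integral_mono (hint y) (hint x) fun ω => hmono (by nlinarith)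
  refine abs_sub_le_of_antitone hanti hα hασ (fun x => ?_) hroot
  simpa only [hmean, hvar] using abs_integral_comp_mul_sub_le hmono.measurable hφid hX2 α x

theorem catoni_bias_bound
    {Ω : Type*} [MeasurableSpace Ω] (μ : Measure Ω) [IsProbabilityMeasure μ]
    (X : Ω → ℝ) (u σ α uα : ℝ)
    (hX2 : MemLp X 2 μ)
    (hmean : ∫ ω, X ω ∂μ = u)
    (hvar : variance X μ = σ^2)
    (hσ : 0 < σ) (hα : 0 < α) (hασ : α^2 * σ^2 < 1)
    (φ : ℝ → ℝ) (hcont : Continuous φ) (hmono : Monotone φ)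
    (hφ : ∀ t : ℝ, -Real.log (1 - t + t^2/2) ≤ φ t ∧ φ t ≤ Real.log (1 + t + t^2/2))
    (hroot : ∫ ω, φ (α * (X ω - uα)) ∂μ = 0) :
    |uα - u| ≤ α * σ^2 / Real.sqrt (1 - α^2 * σ^2) :=
  catoni_bias_bound_general μ X u σ α uα hX2 hmean hvar hα hασ φ hmono hφ hroot
end

section
/- Let X be a real random variable with mean u and variance σ² ∈ (0, ∞), and for n ≥ 1 define β₂ = σ^{-2}·E[|X - u|²·1(|X - u| ≥ √n·σ)] and β₃ = (√n·σ³)^{-1}·E[|X - u|³·1(|X - u| ≤ √n·σ)]. Then √n·(β₂ + β₃) ≥ 23/27. -/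
/-!
For `t ≥ 0` we have `t³ ≥ t² - 4/27`, because the difference is `(t - 2/3)² (t + 1/3)`.
Put `Y = |X - u|` and `a = √n σ`. On `{Y ≤ a}` this bound at `t = Y/σ` controls the integrand
of `β₃`, and on `{Y ≥ a}` we use `√n ≥ 1`, so that pointwise
`√n (Y² 1(Y ≥ a) / σ² + Y³ 1(Y ≤ a) / (√n σ³)) ≥ Y²/σ² - 4/27`.
Taking expectations, and using `E[Y²] = σ²`, gives `√n (β₂ + β₃) ≥ 1 - 4/27 = 23/27`.
-/

open MeasureTheory ProbabilityTheory

lemma sq_sub_le_pow_three {t : ℝ} (ht : 0 ≤ t) : t ^ 2 - 4 / 27 ≤ t ^ 3 := by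
  nlinarith [mul_nonneg (sq_nonneg (t - 2 / 3)) (by linarith : 0 ≤ t + 1 / 3)]

lemma sq_div_sub_le_truncated_moments {s σ y : ℝ} (hs : 1 ≤ s) (hσ : 0 < σ) (hy : 0 ≤ y) :
    y ^ 2 / σ ^ 2 - 4 / 27 ≤
      s * ((σ ^ 2)⁻¹ * (if s * σ ≤ y then y ^ 2 else 0) +
        (s * σ ^ 3)⁻¹ * (if y ≤ s * σ then y ^ 3 else 0)) := by
  have hs0 : 0 < s := by linarith
  by_cases hle : y ≤ s * σ
  · have htail : 0 ≤ (σ ^ 2)⁻¹ * (if s * σ ≤ y then y ^ 2 else 0) := by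
      split_ifs <;> positivity
    calc y ^ 2 / σ ^ 2 - 4 / 27 = (y / σ) ^ 2 - 4 / 27 := by rw [div_pow]
      _ ≤ (y / σ) ^ 3 := sq_sub_le_pow_three (div_nonneg hy hσ.le)
      _ = s * ((s * σ ^ 3)⁻¹ * y ^ 3) := by field_simp
      _ ≤ _ := by rw [if_pos hle]; gcongr; linarith
  · have hlt : s * σ < y := lt_of_not_ge hle
    rw [if_pos hlt.le, if_neg hle, mul_zero, add_zero, ← mul_assoc, ← div_eq_mul_inv,
      div_mul_eq_mul_div]
    have : y ^ 2 / σ ^ 2 ≤ s * y ^ 2 / σ ^ 2 := by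
      gcongr; exact le_mul_of_one_le_left (sq_nonneg y) hs
    linarith

section TruncatedMoments

variable {Ω : Type*} [MeasurableSpace Ω] {μ : Measure Ω} {Z : Ω → ℝ}

lemma integrable_comp_of_abs_le_mul_sq (hZ : MemLp Z 2 μ) {g : ℝ → ℝ} (hg : Measurable g)
    {K : ℝ} (hK : ∀ z, |g z| ≤ K * z ^ 2) : Integrable (fun ω => g (Z ω)) μ :=
  (hZ.integrable_sq.const_mul K).mono' (hg.comp_aemeasurable hZ.aemeasurable).aestronglyMeasurable
    (ae_of_all _ fun ω => hK (Z ω))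

lemma integrable_ite_le_abs_sq (hZ : MemLp Z 2 μ) (c : ℝ) :
    Integrable (fun ω => if c ≤ |Z ω| then |Z ω| ^ 2 else 0) μ := by
  refine integrable_comp_of_abs_le_mul_sq (K := 1) (g := fun z => if c ≤ |z| then |z| ^ 2 else 0)
    hZ (Measurable.ite (measurableSet_le measurable_const (by fun_prop)) (by fun_prop)
      measurable_const) fun z => ?_
  split_ifs <;> simp [sq_nonneg]

lemma integrable_ite_abs_le_pow_three (hZ : MemLp Z 2 μ) (c : ℝ) :
    Integrable (fun ω => if |Z ω| ≤ c then |Z ω| ^ 3 else 0) μ := by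
  refine integrable_comp_of_abs_le_mul_sq (K := |c|) (g := fun z => if |z| ≤ c then |z| ^ 3 else 0)
    hZ (Measurable.ite (measurableSet_le (by fun_prop) measurable_const) (by fun_prop)
      measurable_const) fun z => ?_
  split_ifs with h
  · rw [abs_pow, abs_abs, pow_succ, ← sq_abs z, mul_comm]
    exact mul_le_mul_of_nonneg_right (h.trans (le_abs_self c)) (sq_nonneg _)
  · simp only [abs_zero]; positivity

end TruncatedMoments

theorem beta_sum_lower_bound
    {Ω : Type*} [MeasurableSpace Ω] (μ : Measure Ω) [IsProbabilityMeasure μ]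
    (X : Ω → ℝ) (u σ : ℝ) (n : ℕ) (hn : 1 ≤ n)
    (hX2 : MemLp X 2 μ)
    (hmean : ∫ ω, X ω ∂μ = u)
    (hvar : variance X μ = σ^2)
    (hσ : 0 < σ) :
    (23 : ℝ)/27 ≤ Real.sqrt n *
      ((σ^2)⁻¹ * (∫ ω, (if Real.sqrt n * σ ≤ |X ω - u| then |X ω - u|^2 else 0) ∂μ) +
       (Real.sqrt n * σ^3)⁻¹ *
        (∫ ω, (if |X ω - u| ≤ Real.sqrt n * σ then |X ω - u|^3 else 0) ∂μ)) := by
  set s := Real.sqrt n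
  have hs : 1 ≤ s := Real.one_le_sqrt.mpr (by exact_mod_cast hn)
  have hZ : MemLp (fun ω => X ω - u) 2 μ := hX2.sub (memLp_const u)
  have hsq : Integrable (fun ω => (X ω - u) ^ 2) μ := hZ.integrable_sq
  have hsecond : ∫ ω, (X ω - u) ^ 2 ∂μ = σ ^ 2 := by
    rw [← hvar, variance_eq_integral hX2.aemeasurable, hmean]
  have htail := (integrable_ite_le_abs_sq hZ (s * σ)).const_mul (σ ^ 2)⁻¹
  have hbody := (integrable_ite_abs_le_pow_three hZ (s * σ)).const_mul (s * σ ^ 3)⁻¹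
  calc (23 : ℝ) / 27 = ∫ ω, ((X ω - u) ^ 2 / σ ^ 2 - 4 / 27) ∂μ := by
        rw [integral_sub (hsq.div_const _) (integrable_const _), integral_div, hsecond,
          integral_const, probReal_univ, one_smul, div_self (by positivity)]
        norm_num
    _ ≤ ∫ ω, s * ((σ ^ 2)⁻¹ * (if s * σ ≤ |X ω - u| then |X ω - u| ^ 2 else 0) +
          (s * σ ^ 3)⁻¹ * (if |X ω - u| ≤ s * σ then |X ω - u| ^ 3 else 0)) ∂μ :=
        integral_mono ((hsq.div_const _).sub (integrable_const _)) ((htail.add hbody).const_mul s)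
          fun ω => by
            simpa only [sq_abs] using sq_div_sub_le_truncated_moments hs hσ (abs_nonneg (X ω - u))
    _ = _ := by
        rw [integral_const_mul, integral_add htail hbody, integral_const_mul, integral_const_mul]
end

section
/- Let X have mean u and variance σ² ∈ (0,∞), and define β₂(n) = σ^{-2}·E[|X - u|²·1(|X - u| ≥ √n·σ)] and β₃(n) = (√n·σ³)^{-1}·E[|X - u|³·1(|X - u| ≤ √n·σ)]. Then β₂(n) + β₃(n) → 0 as n → ∞. -/
/-!
Both truncated moments are integrals of functions of `|X - u|` that are dominated by
`|X - u| ^ 2` (for the cubic one because `|X - u| ≤ √n σ` on its support) and vanish pointwise as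
the truncation level `√n σ` tends to infinity, so dominated convergence applies to each.
-/

open MeasureTheory ProbabilityTheory Filter Topology

section TruncatedMoments

variable {Ω : Type*} [MeasurableSpace Ω] {μ : Measure Ω} {Y : Ω → ℝ}

theorem tendsto_integral_comp_abs_of_le_sq {ι : Type*} {l : Filter ι} [l.IsCountablyGenerated]
    {φ : ι → ℝ → ℝ} (hY : MemLp Y 2 μ) (hφ_meas : ∀ i, Measurable (φ i))
    (hφ_bound : ∀ᶠ i in l, ∀ y, 0 ≤ y → ‖φ i y‖ ≤ y ^ 2)
    (hφ_lim : ∀ y, Tendsto (fun i => φ i y) l (𝓝 0)) :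
    Tendsto (fun i => ∫ ω, φ i |Y ω| ∂μ) l (𝓝 0) := by
  have h := tendsto_integral_filter_of_dominated_convergence (F := fun i ω => φ i |Y ω|)
    (f := fun _ => 0) (fun ω => |Y ω| ^ 2)
    (Eventually.of_forall fun i =>
      ((hφ_meas i).comp_aemeasurable hY.1.aemeasurable.abs).aestronglyMeasurable)
    (hφ_bound.mono fun i hi => Eventually.of_forall fun ω => hi _ (abs_nonneg _))
    (by simpa only [sq_abs] using hY.integrable_sq)
    (Eventually.of_forall fun ω => hφ_lim _)
  rwa [integral_zero] at h

theorem tendsto_integral_sq_of_le_abs_atTop (hY : MemLp Y 2 μ) :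
    Tendsto (fun s : ℝ => ∫ ω, (if s ≤ |Y ω| then |Y ω| ^ 2 else 0) ∂μ) atTop (𝓝 0) := by
  refine tendsto_integral_comp_abs_of_le_sq (φ := fun s y => if s ≤ y then y ^ 2 else 0) hY
    (fun s => (measurable_id.pow_const 2).ite measurableSet_Ici measurable_const)
    (Eventually.of_forall fun s y _ => by split_ifs <;> simp [sq_nonneg]) fun y => ?_
  exact tendsto_const_nhds.congr' <|
    (eventually_gt_atTop y).mono fun s hs => (if_neg hs.not_ge).symm

theorem tendsto_inv_mul_integral_cube_of_abs_le_atTop (hY : MemLp Y 2 μ) :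
    Tendsto (fun s : ℝ => s⁻¹ * ∫ ω, (if |Y ω| ≤ s then |Y ω| ^ 3 else 0) ∂μ) atTop (𝓝 0) := by
  simp_rw [← integral_const_mul]
  refine tendsto_integral_comp_abs_of_le_sq (φ := fun s y => s⁻¹ * if y ≤ s then y ^ 3 else 0) hY
    (fun s => ((measurable_id.pow_const 3).ite measurableSet_Iic measurable_const).const_mul _)
    ((eventually_gt_atTop 0).mono fun s hs y hy => ?_) fun y => ?_
  · split_ifs with h
    · rw [Real.norm_of_nonneg (by positivity), inv_mul_le_iff₀ hs, pow_succ, mul_comm s]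
      exact mul_le_mul_of_nonneg_left h (by positivity)
    · simpa using sq_nonneg _
  · simpa only [zero_mul] using (tendsto_inv_atTop_zero.mul_const (y ^ 3)).congr' <|
      (eventually_ge_atTop y).mono fun s hs => by rw [if_pos hs]

end TruncatedMoments

theorem beta_sum_tendsto_zero_general
    {Ω : Type*} [MeasurableSpace Ω] (μ : Measure Ω) [IsProbabilityMeasure μ]
    (X : Ω → ℝ) (u σ : ℝ)
    (hX2 : MemLp X 2 μ)
    (hσ : 0 < σ) :
    Tendsto (fun n : ℕ =>
      (σ^2)⁻¹ * (∫ ω, (if Real.sqrt n * σ ≤ |X ω - u| then |X ω - u|^2 else 0) ∂μ) +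
      (Real.sqrt n * σ^3)⁻¹ *
        (∫ ω, (if |X ω - u| ≤ Real.sqrt n * σ then |X ω - u|^3 else 0) ∂μ))
      atTop (nhds 0) := by
  have hY : MemLp (X - fun _ => u) 2 μ := hX2.sub (memLp_const u)
  have h_level : Tendsto (fun n : ℕ => Real.sqrt n * σ) atTop atTop :=
    (Real.tendsto_sqrt_atTop.comp tendsto_natCast_atTop_atTop).atTop_mul_const hσ
  have h := (((tendsto_integral_sq_of_le_abs_atTop hY).add
    (tendsto_inv_mul_integral_cube_of_abs_le_atTop hY)).comp h_level).const_mul (σ ^ 2)⁻¹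
  rw [add_zero, mul_zero] at h
  refine h.congr fun n => ?_
  simp only [Function.comp_apply, Pi.sub_apply]
  ring

theorem beta_sum_tendsto_zero
    {Ω : Type*} [MeasurableSpace Ω] (μ : Measure Ω) [IsProbabilityMeasure μ]
    (X : Ω → ℝ) (u σ : ℝ)
    (hX2 : MemLp X 2 μ)
    (hmean : ∫ ω, X ω ∂μ = u)
    (hvar : variance X μ = σ^2)
    (hσ : 0 < σ) :
    Tendsto (fun n : ℕ =>
      (σ^2)⁻¹ * (∫ ω, (if Real.sqrt n * σ ≤ |X ω - u| then |X ω - u|^2 else 0) ∂μ) +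
      (Real.sqrt n * σ^3)⁻¹ *
        (∫ ω, (if |X ω - u| ≤ Real.sqrt n * σ then |X ω - u|^3 else 0) ∂μ))
      atTop (nhds 0) :=
  beta_sum_tendsto_zero_general μ X u σ hX2 hσ
end

section
/- Let X have mean u, variance σ² ∈ (0,∞), and E|X - u|^{2+δ} < ∞ for some δ ∈ (0,1]. Then, with β₂ and β₃ as before, β₂ + β₃ ≤ 2·n^{-δ/2}·σ^{-(2+δ)}·E|X - u|^{2+δ}. -/
/-!
Split the deviation `Y = |X - u|` at the level `c = √n σ`. Above `c`, `Y² ≤ c^{-δ} Y^{2+δ}`;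
at or below `c`, `Y³ ≤ c^{1-δ} Y^{2+δ}`. Integrating, each of `β₂`, `β₃` is at most
`σ⁻² c^{-δ} E Y^{2+δ} = n^{-δ/2} σ^{-(2+δ)} E Y^{2+δ}`.
-/

open MeasureTheory ProbabilityTheory

namespace Real

lemma rpow_le_rpow_sub_mul_rpow_of_ge {c y p q : ℝ} (hc : 0 < c) (hcy : c ≤ y) (hpq : p ≤ q) :
    y ^ p ≤ c ^ (p - q) * y ^ q := by
  have hy : 0 < y := hc.trans_le hcy
  calc y ^ p = y ^ (p - q) * y ^ q := by rw [← rpow_add hy, sub_add_cancel]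
    _ ≤ c ^ (p - q) * y ^ q := by
      gcongr ?_ * _
      exact rpow_le_rpow_of_nonpos hc hcy (by linarith)

lemma rpow_le_rpow_sub_mul_rpow_of_le {c y p q : ℝ} (hy : 0 ≤ y) (hyc : y ≤ c) (hq : 0 < q)
    (hqp : q ≤ p) : y ^ p ≤ c ^ (p - q) * y ^ q := by
  rcases hy.eq_or_lt with rfl | hy
  · rw [zero_rpow (hq.trans_le hqp).ne', zero_rpow hq.ne', mul_zero]
  calc y ^ p = y ^ (p - q) * y ^ q := by rw [← rpow_add hy, sub_add_cancel]
    _ ≤ c ^ (p - q) * y ^ q := by gcongr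

end Real

section TruncatedMoments

variable {Ω : Type*} [MeasurableSpace Ω] {μ : Measure Ω} {Y : Ω → ℝ} {c p q : ℝ}

lemma integral_ite_ge_rpow_le (hY : 0 ≤ Y) (hc : 0 < c) (hpq : p ≤ q)
    (hint : Integrable (fun ω => Y ω ^ q) μ) :
    ∫ ω, (if c ≤ Y ω then Y ω ^ p else 0) ∂μ ≤ c ^ (p - q) * ∫ ω, Y ω ^ q ∂μ := by
  rw [← integral_const_mul]
  refine integral_mono_of_nonneg (ae_of_all _ fun ω => ?_) (hint.const_mul _)
    (ae_of_all _ fun ω => ?_)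
  · dsimp only
    split_ifs
    exacts [Real.rpow_nonneg (hY ω) p, le_rfl]
  · dsimp only
    split_ifs with h
    · exact Real.rpow_le_rpow_sub_mul_rpow_of_ge hc h hpq
    · exact mul_nonneg (Real.rpow_nonneg hc.le _) (Real.rpow_nonneg (hY ω) q)

lemma integral_ite_le_rpow_le (hY : 0 ≤ Y) (hc : 0 ≤ c) (hq : 0 < q) (hqp : q ≤ p)
    (hint : Integrable (fun ω => Y ω ^ q) μ) :
    ∫ ω, (if Y ω ≤ c then Y ω ^ p else 0) ∂μ ≤ c ^ (p - q) * ∫ ω, Y ω ^ q ∂μ := by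
  rw [← integral_const_mul]
  refine integral_mono_of_nonneg (ae_of_all _ fun ω => ?_) (hint.const_mul _)
    (ae_of_all _ fun ω => ?_)
  · dsimp only
    split_ifs
    exacts [Real.rpow_nonneg (hY ω) p, le_rfl]
  · dsimp only
    split_ifs with h
    · exact Real.rpow_le_rpow_sub_mul_rpow_of_le (hY ω) h hq hqp
    · exact mul_nonneg (Real.rpow_nonneg hc _) (Real.rpow_nonneg (hY ω) q)

end TruncatedMoments

lemma inv_sq_mul_sqrt_mul_rpow_neg {a σ : ℝ} (ha : 0 ≤ a) (hσ : 0 < σ) (δ : ℝ) :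
    (σ ^ 2)⁻¹ * (√a * σ) ^ (-δ) = a ^ (-(δ / 2)) * σ ^ (-(2 + δ)) := by
  rw [Real.mul_rpow (Real.sqrt_nonneg a) hσ.le, Real.sqrt_eq_rpow, ← Real.rpow_mul ha,
    neg_add, Real.rpow_add hσ, Real.rpow_neg hσ.le 2, Real.rpow_two]
  ring_nf

lemma inv_mul_sq_mul_rpow_one_sub {c s : ℝ} (hc : 0 < c) (δ : ℝ) :
    (c * s ^ 2)⁻¹ * c ^ (1 - δ) = (s ^ 2)⁻¹ * c ^ (-δ) := by
  rw [sub_eq_add_neg, Real.rpow_add hc, Real.rpow_one]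
  field_simp

theorem beta_sum_moment_bound_general
    {Ω : Type*} [MeasurableSpace Ω] (μ : Measure Ω)
    (X : Ω → ℝ) (u σ : ℝ) (δ : ℝ) (hδ0 : 0 < δ) (hδ1 : δ ≤ 1)
    (n : ℕ) (hn : 1 ≤ n)
    (hσ : 0 < σ)
    (hmom : Integrable (fun ω => |X ω - u| ^ ((2:ℝ) + δ)) μ) :
    (σ^2)⁻¹ * (∫ ω, (if Real.sqrt n * σ ≤ |X ω - u| then |X ω - u|^2 else 0) ∂μ) +
      (Real.sqrt n * σ^3)⁻¹ *
        (∫ ω, (if |X ω - u| ≤ Real.sqrt n * σ then |X ω - u|^3 else 0) ∂μ)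
    ≤ 2 * (n : ℝ) ^ (-(δ/2)) * σ ^ (-(2 + δ)) *
        ∫ ω, |X ω - u| ^ ((2:ℝ) + δ) ∂μ := by
  set c := √(n : ℝ) * σ
  have hc : 0 < c := mul_pos (Real.sqrt_pos.2 (by exact_mod_cast hn)) hσ
  have hY : 0 ≤ fun ω => |X ω - u| := fun ω => abs_nonneg _
  have hβ₂ := integral_ite_ge_rpow_le hY hc (p := 2) (by linarith) hmom
  have hβ₃ := integral_ite_le_rpow_le hY hc.le (p := 3) (by positivity) (by linarith) hmom
  rw [show (2 : ℝ) - (2 + δ) = -δ by ring] at hβ₂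
  rw [show (3 : ℝ) - (2 + δ) = 1 - δ by ring] at hβ₃
  simp only [Real.rpow_ofNat] at hβ₂ hβ₃
  rw [show √(n : ℝ) * σ ^ 3 = c * σ ^ 2 by ring]
  calc _ ≤ (σ ^ 2)⁻¹ * (c ^ (-δ) * _) + (c * σ ^ 2)⁻¹ * (c ^ (1 - δ) * _) := by gcongr
    _ = _ := by
      rw [← mul_assoc, ← mul_assoc, inv_mul_sq_mul_rpow_one_sub hc,
        inv_sq_mul_sqrt_mul_rpow_neg (Nat.cast_nonneg n) hσ]
      ring

theorem beta_sum_moment_bound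
    {Ω : Type*} [MeasurableSpace Ω] (μ : Measure Ω) [IsProbabilityMeasure μ]
    (X : Ω → ℝ) (u σ : ℝ) (δ : ℝ) (hδ0 : 0 < δ) (hδ1 : δ ≤ 1)
    (n : ℕ) (hn : 1 ≤ n)
    (hX2 : MemLp X 2 μ)
    (hmean : ∫ ω, X ω ∂μ = u)
    (hvar : variance X μ = σ^2)
    (hσ : 0 < σ)
    (hmom : Integrable (fun ω => |X ω - u| ^ ((2:ℝ) + δ)) μ) :
    (σ^2)⁻¹ * (∫ ω, (if Real.sqrt n * σ ≤ |X ω - u| then |X ω - u|^2 else 0) ∂μ) +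
      (Real.sqrt n * σ^3)⁻¹ *
        (∫ ω, (if |X ω - u| ≤ Real.sqrt n * σ then |X ω - u|^3 else 0) ∂μ)
    ≤ 2 * (n : ℝ) ^ (-(δ/2)) * σ ^ (-(2 + δ)) *
        ∫ ω, |X ω - u| ^ ((2:ℝ) + δ) ∂μ :=
  beta_sum_moment_bound_general μ X u σ δ hδ0 hδ1 n hn hσ hmom
end

section
/- Let Φ be the standard normal CDF. For all real x and all y ≥ 1: |Φ(x) - Φ(y)| ≤ 2·(1 - Φ(y))·y·|y - x|·e^{y·|y - x|}. -/
/-! Between `x` and `y` the density satisfies `φ t ≤ φ y * exp (|y| * |t - y|)`, because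
`-t²/2 = -y²/2 - y (t - y) - (t - y)²/2`; integrating gives the mean-value bound on
`|Φ x - Φ y|`. Integrating `(-φ t / t)' = (1 + t⁻²) φ t ≤ (1 + y⁻²) φ t` over `(y, ∞)` gives
the Mills-ratio bound `y / (1 + y²) * φ y ≤ 1 - Φ y`, hence `φ y ≤ 2 y (1 - Φ y)` for `y ≥ 1`. -/

open MeasureTheory Real Set Filter Topology ProbabilityTheory

local notation "φ" => gaussianPDFReal 0 1

lemma gaussianPDFReal_zero_one : φ = fun t => exp (-t ^ 2 / 2) / √(2 * π) := by
  funext t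
  simp [gaussianPDFReal, div_eq_inv_mul]

lemma hasDerivAt_gaussianPDFReal_zero_one (t : ℝ) : HasDerivAt φ (-t * φ t) t := by
  have h : HasDerivAt (fun s : ℝ => -s ^ 2 / 2) (-t) t :=
    ((hasDerivAt_pow 2 t).fun_neg.div_const 2).congr_deriv (by push_cast; ring)
  rw [gaussianPDFReal_zero_one]
  exact (h.exp.div_const _).congr_deriv (by ring)

lemma tendsto_gaussianPDFReal_zero_one_atTop : Tendsto φ atTop (𝓝 0) := by
  have h : Tendsto (fun t : ℝ => -t ^ 2 / 2) atTop atBot := by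
    simp_rw [neg_div]
    exact tendsto_neg_atTop_atBot.comp ((tendsto_pow_atTop two_ne_zero).atTop_div_const two_pos)
  rw [gaussianPDFReal_zero_one]
  simpa using (tendsto_exp_atBot.comp h).div_const (√(2 * π))

lemma gaussianPDFReal_zero_one_le (t y : ℝ) : φ t ≤ φ y * exp (|y| * |t - y|) := by
  simp only [gaussianPDFReal_zero_one, div_mul_eq_mul_div, ← exp_add]
  gcongr
  nlinarith [sq_nonneg (t - y), neg_abs_le (y * (t - y)), abs_mul y (t - y)]

lemma abs_intervalIntegral_gaussianPDFReal_zero_one_le (x y : ℝ) :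
    |∫ t in y..x, φ t| ≤ φ y * exp (|y| * |x - y|) * |x - y| := by
  refine intervalIntegral.norm_integral_le_of_norm_le_const (f := φ) fun t ht => ?_
  rw [Real.norm_of_nonneg (gaussianPDFReal_nonneg 0 1 t)]
  refine (gaussianPDFReal_zero_one_le t y).trans ?_
  have := gaussianPDFReal_nonneg 0 1 y
  gcongr φ y * exp (|y| * ?_)
  exact abs_sub_left_of_mem_uIcc (uIoc_subset_uIcc ht)

lemma div_one_add_sq_mul_gaussianPDFReal_le_integral_Ioi {y : ℝ} (hy : 0 < y) :
    y / (1 + y ^ 2) * φ y ≤ ∫ t in Ioi y, φ t := by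
  have hderiv : ∀ t ∈ Ici y,
      HasDerivAt (fun s => -(φ s / s)) (φ t * (1 + (t ^ 2)⁻¹)) t := by
    intro t ht
    have ht0 : t ≠ 0 := (hy.trans_le ht).ne'
    exact ((hasDerivAt_gaussianPDFReal_zero_one t).div (hasDerivAt_id t) ht0).neg.congr_deriv
      (by simp only [id]; field_simp; ring)
  have hnonneg : ∀ t ∈ Ioi y, 0 ≤ φ t * (1 + (t ^ 2)⁻¹) := fun t _ =>
    mul_nonneg (gaussianPDFReal_nonneg 0 1 t) (by positivity)
  have hlim : Tendsto (fun s => -(φ s / s)) atTop (𝓝 0) := by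
    simpa [div_eq_mul_inv] using
      (tendsto_gaussianPDFReal_zero_one_atTop.mul tendsto_inv_atTop_zero).neg
  have hle :
      ∫ t in Ioi y, φ t * (1 + (t ^ 2)⁻¹) ≤ ∫ t in Ioi y, (1 + (y ^ 2)⁻¹) * φ t := by
    refine setIntegral_mono_on (integrableOn_Ioi_deriv_of_nonneg' hderiv hnonneg hlim)
      ((integrable_gaussianPDFReal 0 1).integrableOn.const_mul _) measurableSet_Ioi fun t ht => ?_
    have := gaussianPDFReal_nonneg 0 1 t
    rw [mul_comm]
    gcongr
    exact ht.le
  rw [integral_Ioi_of_hasDerivAt_of_nonneg' hderiv hnonneg hlim, integral_const_mul,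
    zero_sub, neg_neg] at hle
  calc y / (1 + y ^ 2) * φ y = y ^ 2 / (1 + y ^ 2) * (φ y / y) := by field_simp
    _ ≤ y ^ 2 / (1 + y ^ 2) * ((1 + (y ^ 2)⁻¹) * ∫ t in Ioi y, φ t) := by gcongr
    _ = ∫ t in Ioi y, φ t := by field_simp; ring

lemma gaussianPDFReal_zero_one_le_two_mul_integral_Ioi {y : ℝ} (hy : 1 ≤ y) :
    φ y ≤ 2 * y * ∫ t in Ioi y, φ t := by
  have hy0 : 0 < y := one_pos.trans_le hy
  calc φ y ≤ 2 * y * (y / (1 + y ^ 2) * φ y) := by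
        rw [← mul_assoc, ← mul_div_assoc,
          le_mul_iff_one_le_left (gaussianPDFReal_pos 0 1 y one_ne_zero), one_le_div (by positivity)]
        nlinarith
    _ ≤ 2 * y * ∫ t in Ioi y, φ t := by
        gcongr
        exact div_one_add_sq_mul_gaussianPDFReal_le_integral_Ioi hy0

theorem normal_cdf_diff_bound (Φ : ℝ → ℝ)
    (hΦ : ∀ y : ℝ, Φ y = ∫ t in Set.Iic y, Real.exp (-t^2/2) / Real.sqrt (2 * Real.pi)) :
    ∀ x y : ℝ, 1 ≤ y →
      |Φ x - Φ y| ≤ 2 * (1 - Φ y) * y * |y - x| * Real.exp (y * |y - x|) := by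
  intro x y hy
  have hφ : Integrable φ := integrable_gaussianPDFReal 0 1
  have hΦφ (z : ℝ) : Φ z = ∫ t in Iic z, φ t := by rw [hΦ, gaussianPDFReal_zero_one]
  have hdiff : Φ x - Φ y = ∫ t in y..x, φ t := by
    rw [hΦφ, hΦφ, intervalIntegral.integral_Iic_sub_Iic hφ.integrableOn hφ.integrableOn]
  have htail : 1 - Φ y = ∫ t in Ioi y, φ t := by
    rw [hΦφ, ← integral_gaussianPDFReal_eq_one 0 one_ne_zero,
      ← intervalIntegral.integral_Iic_add_Ioi hφ.integrableOn hφ.integrableOn, add_sub_cancel_left]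
  calc |Φ x - Φ y| ≤ φ y * exp (|y| * |x - y|) * |x - y| := by
        rw [hdiff]; exact abs_intervalIntegral_gaussianPDFReal_zero_one_le x y
    _ ≤ 2 * y * (∫ t in Ioi y, φ t) * exp (y * |y - x|) * |y - x| := by
        rw [abs_of_pos (one_pos.trans_le hy), abs_sub_comm]
        gcongr
        exact gaussianPDFReal_zero_one_le_two_mul_integral_Ioi hy
    _ = 2 * (1 - Φ y) * y * |y - x| * exp (y * |y - x|) := by rw [htail]; ring
end
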